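/- Let A be a Hermitian d×d complex matrix whose largest eigenvalue is λ_max = 1 and whose smallest eigenvalue is λ_min ≥ −1, and set λ̄ = (λ_min + λ_max)/2 and Ã = (A − λ̄·I)/(1 − λ̄) (assuming λ_min < 1). Suppose c > 0 and c·A = c₀·B₀ + c₁·B₁ where B₀, B₁ are Hermitian with ‖B₀‖, ‖B₁‖ ≤ 1, c₀, c₁ > 0, and c₀ + c₁ > c (a strictly norm-increasing sub-decomposition). Then there exists a unit vector ψ in ℂ^d such that c·(1 − λ̄)·√(1 − ⟨ψ, Ã ψ⟩²) < c₀·√(1 − ⟨ψ, B₀ ψ⟩²) + c₁·√(1 − ⟨ψ, B₁ ψ⟩²). -/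

import Mathlib

open scoped Matrix Matrix.Norms.L2Operator

/-- The expectation value `⟨ψ, A ψ⟩` (real part) of a matrix `A` on a vector `ψ`. -/
noncomputable def expval {d : ℕ} (A : Matrix (Fin d) (Fin d) ℂ) (ψ : Fin d → ℂ) : ℝ :=
  (star ψ ⬝ᵥ A.mulVec ψ).re

/-!
Let `ψ₊, ψ₋` be orthonormal eigenvectors of `A` for the eigenvalues `1` and `λ_min`. There `Ã` has
expectation `±1`, so the centre term vanishes; if the sub-decomposition were nowhere worse, each
`Bᵢ` would have expectation `bᵢ = ±1` at `ψ₊` and `tᵢ = ±1` at `ψ₋`. The identities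
`c = c₀ b₀ + c₁ b₁` and `c λ_min = c₀ t₀ + c₁ t₁` together with `c < c₀ + c₁` force `λ_min = -1` and
`tᵢ = -bᵢ`, and since `‖Bᵢ‖ ≤ 1` an expectation `±1` makes `ψ±` eigenvectors of `Bᵢ`. On
`(ψ₊ + ψ₋)/√2` all three expectations then vanish, and there the assumption says `c₀ + c₁ ≤ c`.
-/

theorem eq_smul_of_norm_le_one_of_abs_re_inner_eq_one {𝕜 E : Type*} [RCLike 𝕜]
    [NormedAddCommGroup E] [InnerProductSpace 𝕜 E] {u v : E} (hu : ‖u‖ = 1) (hv : ‖v‖ ≤ 1)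
    (h : |RCLike.re (inner 𝕜 u v)| = 1) : v = (RCLike.re (inner 𝕜 u v) : 𝕜) • u := by
  set s := RCLike.re (inner 𝕜 u v)
  have hs : s ^ 2 = 1 := by rw [← sq_abs, h, one_pow]
  have hsq : ‖v - (s : 𝕜) • u‖ ^ 2 = ‖v‖ ^ 2 - 1 := by
    rw [norm_sub_sq (𝕜 := 𝕜), inner_smul_right, RCLike.re_ofReal_mul, inner_re_symm, norm_smul,
      RCLike.norm_ofReal, h, hu]
    linear_combination -2 * hs
  refine sub_eq_zero.mp (norm_eq_zero.mp ?_)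
  nlinarith [norm_nonneg v, norm_nonneg (v - (s : 𝕜) • u)]

theorem OrthonormalBasis.star_dotProduct_apply {𝕜 n : Type*} [RCLike 𝕜] [Fintype n]
    [DecidableEq n] (b : OrthonormalBasis n 𝕜 (EuclideanSpace 𝕜 n)) (i j : n) :
    star (b i).ofLp ⬝ᵥ (b j).ofLp = if i = j then 1 else 0 := by
  rw [← orthonormal_iff_ite.mp b.orthonormal i j, EuclideanSpace.inner_eq_star_dotProduct,
    dotProduct_comm]

theorem Matrix.IsHermitian.exists_orthonormal_eigenvectors {𝕜 n : Type*} [RCLike 𝕜]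
    [Fintype n] [DecidableEq n] {A : Matrix n n 𝕜} (hA : A.IsHermitian) {a b : ℝ}
    (ha : a ∈ Set.range hA.eigenvalues) (hb : b ∈ Set.range hA.eigenvalues) (hab : a ≠ b) :
    ∃ u v : n → 𝕜, star u ⬝ᵥ u = 1 ∧ star v ⬝ᵥ v = 1 ∧ star u ⬝ᵥ v = 0 ∧
      A *ᵥ u = a • u ∧ A *ᵥ v = b • v := by
  obtain ⟨i, rfl⟩ := ha
  obtain ⟨j, rfl⟩ := hb
  have hij : i ≠ j := fun h => hab (congrArg _ h)
  refine ⟨_, _, ?_, ?_, ?_, hA.mulVec_eigenvectorBasis i, hA.mulVec_eigenvectorBasis j⟩ <;>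
    simp [hA.eigenvectorBasis.star_dotProduct_apply, hij]

section expval

variable {d : ℕ}

theorem expval_add (M N : Matrix (Fin d) (Fin d) ℂ) (ψ : Fin d → ℂ) :
    expval (M + N) ψ = expval M ψ + expval N ψ := by
  simp [expval, Matrix.add_mulVec]

theorem expval_smul (r : ℝ) (M : Matrix (Fin d) (Fin d) ℂ) (ψ : Fin d → ℂ) :
    expval (r • M) ψ = r * expval M ψ := by
  simp [expval, Matrix.smul_mulVec, Complex.real_smul]

theorem expval_of_mulVec_eq_smul {M : Matrix (Fin d) (Fin d) ℂ} {ψ : Fin d → ℂ} {a : ℝ}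
    (hM : M *ᵥ ψ = a • ψ) (hψ : star ψ ⬝ᵥ ψ = 1) : expval M ψ = a := by
  simp [expval, hM, Complex.real_smul, hψ]

theorem expval_smul_sub_smul_one (r s : ℝ) (M : Matrix (Fin d) (Fin d) ℂ) {ψ : Fin d → ℂ}
    (hψ : star ψ ⬝ᵥ ψ = 1) : expval (r • (M - s • 1)) ψ = r * (expval M ψ - s) := by
  simp [expval, Matrix.sub_mulVec, Matrix.smul_mulVec, Complex.real_smul, hψ]

theorem norm_toLp_eq_one {ψ : Fin d → ℂ} (hψ : star ψ ⬝ᵥ ψ = 1) :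
    ‖WithLp.toLp 2 ψ‖ = 1 := by
  have h : ‖WithLp.toLp 2 ψ‖ ^ 2 = 1 ^ 2 := by
    rw [@norm_sq_eq_re_inner ℂ, EuclideanSpace.inner_eq_star_dotProduct, dotProduct_comm]
    simp [hψ]
  exact (pow_left_inj₀ (norm_nonneg _) zero_le_one two_ne_zero).mp h

theorem expval_eq_re_inner (M : Matrix (Fin d) (Fin d) ℂ) (ψ : Fin d → ℂ) :
    expval M ψ = RCLike.re (inner ℂ (WithLp.toLp 2 ψ) (WithLp.toLp 2 (M *ᵥ ψ))) := by
  rw [EuclideanSpace.inner_eq_star_dotProduct, dotProduct_comm]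
  rfl

variable {B : Matrix (Fin d) (Fin d) ℂ} {ψ : Fin d → ℂ}

theorem norm_toLp_mulVec_le_one (hB : ‖B‖ ≤ 1) (hψ : star ψ ⬝ᵥ ψ = 1) :
    ‖WithLp.toLp 2 (B *ᵥ ψ)‖ ≤ 1 := by
  calc ‖WithLp.toLp 2 (B *ᵥ ψ)‖ ≤ ‖B‖ * ‖WithLp.toLp 2 ψ‖ := B.l2_opNorm_mulVec _
    _ ≤ 1 := by rw [norm_toLp_eq_one hψ, mul_one]; exact hB

theorem abs_expval_le_one (hB : ‖B‖ ≤ 1) (hψ : star ψ ⬝ᵥ ψ = 1) : |expval B ψ| ≤ 1 := by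
  rw [expval_eq_re_inner]
  calc _ ≤ ‖inner ℂ (WithLp.toLp 2 ψ) (WithLp.toLp 2 (B *ᵥ ψ))‖ := RCLike.abs_re_le_norm _
    _ ≤ ‖WithLp.toLp 2 ψ‖ * ‖WithLp.toLp 2 (B *ᵥ ψ)‖ := norm_inner_le_norm _ _
    _ ≤ 1 := by rw [norm_toLp_eq_one hψ, one_mul]; exact norm_toLp_mulVec_le_one hB hψ

theorem mulVec_eq_expval_smul (hB : ‖B‖ ≤ 1) (hψ : star ψ ⬝ᵥ ψ = 1)
    (h : |expval B ψ| = 1) : B *ᵥ ψ = expval B ψ • ψ := by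
  rw [expval_eq_re_inner] at h ⊢
  have := congrArg WithLp.ofLp (eq_smul_of_norm_le_one_of_abs_re_inner_eq_one
    (norm_toLp_eq_one hψ) (norm_toLp_mulVec_le_one hB hψ) h)
  simpa [funext_iff, Complex.real_smul] using this

end expval

section superposition

variable {d : ℕ} {u v : Fin d → ℂ}

theorem star_dotProduct_superposition (hu : star u ⬝ᵥ u = 1) (hv : star v ⬝ᵥ v = 1)
    (huv : star u ⬝ᵥ v = 0) :
    star ((√2)⁻¹ • (u + v)) ⬝ᵥ ((√2)⁻¹ • (u + v)) = 1 := by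
  have hvu : star v ⬝ᵥ u = 0 := by rw [Matrix.star_dotProduct, huv, star_zero]
  simp only [star_smul, star_add, star_trivial, smul_dotProduct, dotProduct_smul, add_dotProduct,
    dotProduct_add, hu, hv, huv, hvu, Complex.real_smul]
  have h := congrArg Complex.ofReal TsirelsonInequality.sqrt_two_inv_mul_self
  push_cast at h ⊢
  linear_combination 2 * h

theorem expval_superposition {M : Matrix (Fin d) (Fin d) ℂ} {a b : ℝ} (hMu : M *ᵥ u = a • u)
    (hMv : M *ᵥ v = b • v) (hu : star u ⬝ᵥ u = 1) (hv : star v ⬝ᵥ v = 1)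
    (huv : star u ⬝ᵥ v = 0) : expval M ((√2)⁻¹ • (u + v)) = (a + b) / 2 := by
  have hvu : star v ⬝ᵥ u = 0 := by rw [Matrix.star_dotProduct, huv, star_zero]
  simp only [expval, Matrix.mulVec_smul, Matrix.mulVec_add, hMu, hMv, star_smul, star_add,
    star_trivial, smul_dotProduct, dotProduct_smul, add_dotProduct, dotProduct_add, hu, hv, huv,
    hvu, Complex.real_smul]
  norm_cast
  push_cast
  linear_combination (a + b) * TsirelsonInequality.sqrt_two_inv_mul_self

theorem expval_superposition_eq_zero {B : Matrix (Fin d) (Fin d) ℂ} (hB : ‖B‖ ≤ 1)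
    (hu : star u ⬝ᵥ u = 1) (hv : star v ⬝ᵥ v = 1) (huv : star u ⬝ᵥ v = 0)
    (hBu : |expval B u| = 1) (hBv : expval B v = -expval B u) :
    expval B ((√2)⁻¹ • (u + v)) = 0 := by
  have hBv' : |expval B v| = 1 := by rw [hBv, abs_neg, hBu]
  rw [expval_superposition (mulVec_eq_expval_smul hB hu hBu) (mulVec_eq_expval_smul hB hv hBv')
    hu hv huv, hBv]
  ring

end superposition

theorem abs_eq_one_of_add_mul_sqrt_nonpos {c₀ c₁ x y : ℝ} (hc₀ : 0 < c₀) (hc₁ : 0 < c₁)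
    (hx : |x| ≤ 1) (hy : |y| ≤ 1) (h : c₀ * √(1 - x ^ 2) + c₁ * √(1 - y ^ 2) ≤ 0) :
    |x| = 1 ∧ |y| = 1 := by
  have h₀ := mul_nonneg hc₀.le (Real.sqrt_nonneg (1 - x ^ 2))
  have h₁ := mul_nonneg hc₁.le (Real.sqrt_nonneg (1 - y ^ 2))
  have hx0 := (mul_eq_zero.mp (by linarith : c₀ * √(1 - x ^ 2) = 0)).resolve_left hc₀.ne'
  have hy0 := (mul_eq_zero.mp (by linarith : c₁ * √(1 - y ^ 2) = 0)).resolve_left hc₁.ne'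
  rw [Real.sqrt_eq_zero', sub_nonpos, one_le_sq_iff_one_le_abs] at hx0 hy0
  exact ⟨le_antisymm hx hx0, le_antisymm hy hy0⟩

theorem eq_neg_one_and_eq_neg_of_abs_eq_one {c c₀ c₁ l b₀ b₁ t₀ t₁ : ℝ} (hc : 0 < c)
    (hinc : c < c₀ + c₁) (hl : -1 ≤ l) (hl' : l < 1) (hb₀ : |b₀| = 1) (hb₁ : |b₁| = 1)
    (ht₀ : |t₀| = 1) (ht₁ : |t₁| = 1) (hb : c = c₀ * b₀ + c₁ * b₁)
    (ht : c * l = c₀ * t₀ + c₁ * t₁) : l = -1 ∧ t₀ = -b₀ ∧ t₁ = -b₁ := by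
  have hcl : -c ≤ c * l := by nlinarith
  have hcl' : c * l < c := by nlinarith
  rcases (abs_eq zero_le_one).mp hb₀ with rfl | rfl <;>
    rcases (abs_eq zero_le_one).mp hb₁ with rfl | rfl <;>
    rcases (abs_eq zero_le_one).mp ht₀ with rfl | rfl <;>
    rcases (abs_eq zero_le_one).mp ht₁ with rfl | rfl <;>
    first
    | exfalso; linarith
    | exact ⟨by nlinarith, by norm_num, by norm_num⟩

theorem stmt_3_general {d : ℕ} (A : Matrix (Fin d) (Fin d) ℂ) (hA : A.IsHermitian)
    (lmin : ℝ)
    (hmax : IsGreatest (Set.range hA.eigenvalues) 1)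
    (hmin : IsLeast (Set.range hA.eigenvalues) lmin)
    (hge : -1 ≤ lmin) (hlt : lmin < 1)
    (lbar : ℝ) (hlbar : lbar = (lmin + 1) / 2)
    (Atil : Matrix (Fin d) (Fin d) ℂ)
    (hAtil : Atil = (1 - lbar)⁻¹ • (A - lbar • (1 : Matrix (Fin d) (Fin d) ℂ)))
    (c c₀ c₁ : ℝ) (hc : 0 < c) (hc₀ : 0 < c₀) (hc₁ : 0 < c₁)
    (B₀ B₁ : Matrix (Fin d) (Fin d) ℂ)
    (hB₀n : ‖B₀‖ ≤ 1) (hB₁n : ‖B₁‖ ≤ 1)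
    (hsplit : c • A = c₀ • B₀ + c₁ • B₁)
    (hinc : c < c₀ + c₁) :
    ∃ ψ : Fin d → ℂ, star ψ ⬝ᵥ ψ = 1 ∧
      c * (1 - lbar) * Real.sqrt (1 - expval Atil ψ ^ 2)
        < c₀ * Real.sqrt (1 - expval B₀ ψ ^ 2) + c₁ * Real.sqrt (1 - expval B₁ ψ ^ 2) := by
  by_contra! hle
  obtain ⟨ψM, ψm, hψM, hψm, hψMm, hAM, hAm⟩ :=
    hA.exists_orthonormal_eigenvectors hmax.1 hmin.1 hlt.ne'
  have hlbar_ne : 1 - lbar ≠ 0 := by rw [hlbar]; linarith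
  have hAtil_expval (ψ : Fin d → ℂ) (hψ : star ψ ⬝ᵥ ψ = 1) :
      expval Atil ψ = (1 - lbar)⁻¹ * (expval A ψ - lbar) :=
    hAtil ▸ expval_smul_sub_smul_one _ _ _ hψ
  have hsplit_expval (ψ : Fin d → ℂ) :
      c * expval A ψ = c₀ * expval B₀ ψ + c₁ * expval B₁ ψ := by
    rw [← expval_smul, hsplit, expval_add, expval_smul, expval_smul]
  have extremal (ψ : Fin d → ℂ) (hψ : star ψ ⬝ᵥ ψ = 1) (hAψ : |expval Atil ψ| = 1) :
      |expval B₀ ψ| = 1 ∧ |expval B₁ ψ| = 1 := by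
    have h2 : expval Atil ψ ^ 2 = 1 := by rw [← sq_abs, hAψ, one_pow]
    exact abs_eq_one_of_add_mul_sqrt_nonpos hc₀ hc₁ (abs_expval_le_one hB₀n hψ)
      (abs_expval_le_one hB₁n hψ) (by simpa [h2] using hle ψ hψ)
  obtain ⟨hb₀, hb₁⟩ := extremal ψM hψM <| by
    rw [hAtil_expval ψM hψM, expval_of_mulVec_eq_smul hAM hψM, inv_mul_cancel₀ hlbar_ne, abs_one]
  obtain ⟨ht₀, ht₁⟩ := extremal ψm hψm <| by
    rw [hAtil_expval ψm hψm, expval_of_mulVec_eq_smul hAm hψm,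
      show lmin - lbar = -(1 - lbar) by rw [hlbar]; ring, mul_neg, inv_mul_cancel₀ hlbar_ne,
      abs_neg, abs_one]
  obtain ⟨hl, ht₀', ht₁'⟩ := eq_neg_one_and_eq_neg_of_abs_eq_one hc hinc hge hlt hb₀ hb₁ ht₀ ht₁
    (by simpa [expval_of_mulVec_eq_smul hAM hψM] using hsplit_expval ψM)
    (by simpa [expval_of_mulVec_eq_smul hAm hψm] using hsplit_expval ψm)
  have hψ := star_dotProduct_superposition hψM hψm hψMm
  have hAψ : expval Atil ((√2)⁻¹ • (ψM + ψm)) = 0 := by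
    rw [hAtil_expval _ hψ, expval_superposition hAM hAm hψM hψm hψMm, hlbar]
    ring
  have := hle _ hψ
  rw [hAψ, expval_superposition_eq_zero hB₀n hψM hψm hψMm hb₀ ht₀',
    expval_superposition_eq_zero hB₁n hψM hψm hψMm hb₁ ht₁', hlbar, hl] at this
  norm_num at this
  linarith

/-- **Lemma 2** (per-term): let `A` be Hermitian with largest eigenvalue `1` and smallest
eigenvalue `λ_min ∈ [-1, 1)`; let `λ̄ = (λ_min + 1)/2` and `Ã = (A − λ̄·I)/(1 − λ̄)` be its
center. Any strictly norm-increasing sub-decomposition `c·A = c₀·B₀ + c₁·B₁`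
(`c₀ + c₁ > c`) is strictly worse than the center term `c(1−λ̄)·Ã` on some unit state. -/
theorem stmt_3 {d : ℕ} (A : Matrix (Fin d) (Fin d) ℂ) (hA : A.IsHermitian)
    (lmin : ℝ)
    (hmax : IsGreatest (Set.range hA.eigenvalues) 1)
    (hmin : IsLeast (Set.range hA.eigenvalues) lmin)
    (hge : -1 ≤ lmin) (hlt : lmin < 1)
    (lbar : ℝ) (hlbar : lbar = (lmin + 1) / 2)
    (Atil : Matrix (Fin d) (Fin d) ℂ)
    (hAtil : Atil = (1 - lbar)⁻¹ • (A - lbar • (1 : Matrix (Fin d) (Fin d) ℂ)))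
    (c c₀ c₁ : ℝ) (hc : 0 < c) (hc₀ : 0 < c₀) (hc₁ : 0 < c₁)
    (B₀ B₁ : Matrix (Fin d) (Fin d) ℂ)
    (hB₀ : B₀.IsHermitian) (hB₁ : B₁.IsHermitian)
    (hB₀n : ‖B₀‖ ≤ 1) (hB₁n : ‖B₁‖ ≤ 1)
    (hsplit : c • A = c₀ • B₀ + c₁ • B₁)
    (hinc : c < c₀ + c₁) :
    ∃ ψ : Fin d → ℂ, star ψ ⬝ᵥ ψ = 1 ∧
      c * (1 - lbar) * Real.sqrt (1 - expval Atil ψ ^ 2)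
        < c₀ * Real.sqrt (1 - expval B₀ ψ ^ 2) + c₁ * Real.sqrt (1 - expval B₁ ψ ^ 2) :=
  stmt_3_general A hA lmin hmax hmin hge hlt lbar hlbar Atil hAtil c c₀ c₁ hc hc₀ hc₁ B₀ B₁ hB₀n
    hB₁n hsplit hinc
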